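/- arXiv:1104.5265 — 2 statements merged into one kernel-verified Lean document; each statement's English description precedes it below -/
import Mathlib

section
/- A pointed compactum (X, x₀) is a PAANR if and only if the following holds: for every compactum Z, every closed subset Y ⊆ Z, every point y₀ ∈ Y, every decreasing sequence Y₁ ⊇ Y₂ ⊇ ⋯ of closed subsets of Z with ⋂ₙ Yₙ = Y, and every continuous function λ : Y → X with λ(y₀) = x₀, there exists a sequence of continuous functions λₙ : Yₙ → X such that λₙ(y₀) = λ(y₀) for every n and λₙ(y) → λ(y) uniformly over y ∈ Y (uniform convergence with respect to some, equivalently any, compatible metric on X). -/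
/-!
(⇒) Embed `X` in the Hilbert cube `Q` and extend `λ` to `Λ : Z → Q` by Tietze. The PAANR maps
`r k`, defined on closed neighbourhoods of `X` in `Q` and moving `X` by at most `1 / (k + 1)`, are
defined on `Λ '' Yₙ` once `n` is large, by compactness; take `λₙ = r (κ n) ∘ Λ` for a slowly
growing `κ`. As `X` is compact, its metric and the one pulled back from `Q` define the same
uniformity, so uniform convergence in `Q` gives uniform convergence in `X`.

(⇐) For `X ⊆ Y`, embed `Y` in the Hilbert cube and apply the property to the closed
`1 / (n + 1)`-neighbourhoods `Uₙ` of `X` and to `λ` the inverse of the embedding: some `λ_N` is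
`ε`-close to the identity on `X`, and its restriction to `U_N` is the required map.
-/

open Topology

universe u v

/-- A pointed compactum `(X, x₀)` is a *pointed approximative absolute neighborhood
retract* (PAANR) if for every compact metric space `Y`, every topological embedding
`θ : X → Y`, and every `ε > 0`, there exist `δ > 0` and a continuous map
`r : U_δ → X` (where `U_δ = {y | dist (y, θ(X)) ≤ δ}`) with `r (θ x₀) = x₀` which moves
the points of `θ(X)` by at most `ε`. -/
def IsPAANR (X : Type u) [TopologicalSpace X] (x₀ : X) : Prop :=
  ∀ (Y : Type v) [MetricSpace Y] [CompactSpace Y] (θ : X → Y),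
    IsEmbedding θ →
    ∀ ε > (0 : ℝ), ∃ δ > (0 : ℝ), ∃ r : Y → X,
      ContinuousOn r {y | Metric.infDist y (Set.range θ) ≤ δ} ∧
      r (θ x₀) = x₀ ∧
      ∀ x : X, dist (θ (r (θ x))) (θ x) ≤ ε

open Metric Set Filter Topology TopologicalSpace unitInterval

universe w

theorem tendstoUniformlyOn_atTop_iff_forall_dist_le {α β : Type*} [PseudoMetricSpace β]
    {F : ℕ → α → β} {f : α → β} {s : Set α} :
    TendstoUniformlyOn F f atTop s ↔
      ∀ ε > (0 : ℝ), ∃ N : ℕ, ∀ n ≥ N, ∀ y ∈ s, dist (F n y) (f y) ≤ ε := by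
  simp [atTop_basis.tendstoUniformlyOn_iff uniformity_basis_dist_le, dist_comm]

theorem tendstoUniformlyOn_of_forall_dist_le {ι α β : Type*} [PseudoMetricSpace β]
    {F : ι → α → β} {f : α → β} {p : Filter ι} {s : Set α} {a : ι → ℝ}
    (ha : Tendsto a p (𝓝 0)) (h : ∀ᶠ i in p, ∀ y ∈ s, dist (F i y) (f y) ≤ a i) :
    TendstoUniformlyOn F f p s :=
  Metric.tendstoUniformlyOn_iff.2 fun _ hε =>
    (h.and (ha.eventually (gt_mem_nhds hε))).mono fun _ hi y hy =>
      (dist_comm (f y) _ ▸ hi.1 y hy).trans_lt hi.2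

theorem Topology.IsInducing.isUniformInducing {α β : Type*} [UniformSpace α] [CompactSpace α]
    [UniformSpace β] {f : α → β} (hf : IsInducing f) : IsUniformInducing f :=
  ⟨congrArg (@uniformity α) <| unique_uniformity_of_compact
    (UniformSpace.toTopologicalSpace_comap.trans hf.eq_induced.symm) rfl⟩

theorem Topology.IsInducing.tendstoUniformlyOn_comp_iff {ι α β γ : Type*} [UniformSpace β]
    [CompactSpace β] [UniformSpace γ] {θ : β → γ} (hθ : IsInducing θ) {F : ι → α → β}
    {f : α → β} {p : Filter ι} {s : Set α} :
    TendstoUniformlyOn (fun i => θ ∘ F i) (θ ∘ f) p s ↔ TendstoUniformlyOn F f p s := by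
  rw [tendstoUniformlyOn_iff_tendsto, tendstoUniformlyOn_iff_tendsto,
    ← hθ.isUniformInducing.comap_uniformity, tendsto_comap_iff]
  rfl

theorem exists_tendsto_atTop_eventually {P : ℕ → ℕ → Prop} (hP : ∀ k, ∀ᶠ n in atTop, P k n) :
    ∃ κ : ℕ → ℕ, Tendsto κ atTop atTop ∧ ∀ᶠ n in atTop, P (κ n) n := by
  classical
  choose N hN using fun k => eventually_atTop.1 (hP k)
  refine ⟨fun n => Nat.findGreatest (fun k => ∀ j ≤ k, N j ≤ n) n, ?_, ?_⟩
  · refine tendsto_atTop_atTop.2 fun K => ⟨K + ∑ j ∈ Finset.range (K + 1), N j, fun n hn => ?_⟩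
    refine Nat.le_findGreatest (by omega) fun j hj => ?_
    have : N j ≤ ∑ i ∈ Finset.range (K + 1), N i :=
      Finset.single_le_sum (fun i _ => Nat.zero_le (N i)) (Finset.mem_range_succ_iff.2 hj)
    omega
  · refine eventually_atTop.2 ⟨N 0, fun n hn => hN _ _ ?_⟩
    exact Nat.findGreatest_spec (P := fun k => ∀ j ≤ k, N j ≤ n) (Nat.zero_le n)
      (fun j hj => Nat.le_zero.1 hj ▸ hn) _ le_rfl

theorem Antitone.eventually_subset_of_forall_mem_nhds {Z : Type*} [TopologicalSpace Z]
    [CompactSpace Z] {K : ℕ → Set Z} (hK : Antitone K) (hK_closed : ∀ n, IsClosed (K n))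
    {U : Set Z} (hU : ∀ z ∈ ⋂ n, K n, U ∈ 𝓝 z) : ∀ᶠ n in atTop, K n ⊆ U :=
  let ⟨N, hN⟩ := exists_subset_nhds_of_isCompact' hK.directed_ge
    (fun n => (hK_closed n).isCompact) hK_closed hU
  eventually_atTop.2 ⟨N, fun _ hn => (hK hn).trans hN⟩

theorem iInter_setOf_infDist_le_one_div_add_one {Y : Type*} [PseudoMetricSpace Y] {s : Set Y}
    (hs : IsClosed s) (hne : s.Nonempty) :
    ⋂ n : ℕ, {y | infDist y s ≤ 1 / (n + 1)} = s := by
  ext y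
  simp only [mem_iInter, mem_ofPred_eq]
  refine ⟨fun h => ?_, fun hy n => by rw [infDist_zero_of_mem hy]; positivity⟩
  rw [hs.mem_iff_infDist_zero hne]
  exact le_antisymm (ge_of_tendsto' tendsto_one_div_add_atTop_nhds_zero_nat h) infDist_nonneg

theorem Topology.IsEmbedding.continuousOn_invFun {X Y : Type*} [TopologicalSpace X]
    [TopologicalSpace Y] [Nonempty X] {f : X → Y} (hf : IsEmbedding f) :
    ContinuousOn (Function.invFun f) (range f) := by
  rw [hf.isInducing.continuousOn_iff]
  exact continuousOn_id.congr fun _ hy => Function.invFun_eq hy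

instance ULift.instTietzeExtension {Y : Type*} [TopologicalSpace Y] [TietzeExtension.{u} Y] :
    TietzeExtension.{u} (ULift.{w} Y) :=
  .of_homeo Homeomorph.ulift

theorem exists_isEmbedding_uLift_hilbertCube (X : Type*) [MetricSpace X] [SeparableSpace X] :
    ∃ e : X → ULift.{w} (ℕ → I), IsEmbedding e :=
  let ⟨F, hF⟩ := Metric.PiNatEmbed.exists_embedding_to_hilbert_cube (X := X)
  ⟨ULift.up ∘ F, Homeomorph.ulift.symm.isEmbedding.comp hF⟩

theorem ContinuousOn.exists_continuous_eqOn {Z : Type u} {T : Type*} [TopologicalSpace Z]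
    [NormalSpace Z] [TopologicalSpace T] [TietzeExtension.{u} T] {Y : Set Z} (hY : IsClosed Y)
    {g : Z → T} (hg : ContinuousOn g Y) : ∃ G : Z → T, Continuous G ∧ EqOn G g Y :=
  let ⟨G, hG⟩ := ContinuousMap.exists_restrict_eq hY ⟨Y.domRestrict g, hg.domRestrict⟩
  ⟨G, G.continuous, fun y hy => congr($hG ⟨y, hy⟩)⟩

def ApproximatePointedExtensionProperty (X : Type u) [MetricSpace X] (x₀ : X) : Prop :=
  ∀ (Z : Type v) [TopologicalSpace Z] [CompactSpace Z] [MetrizableSpace Z] [Nonempty Z]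
    (Y : Set Z), IsClosed Y → ∀ y₀ ∈ Y,
    ∀ Yn : ℕ → Set Z, (∀ n, IsClosed (Yn n)) → (∀ n, Yn (n + 1) ⊆ Yn n) →
      (⋂ n, Yn n) = Y →
      ∀ lam : Z → X, ContinuousOn lam Y → lam y₀ = x₀ →
        ∃ l : ℕ → Z → X,
          (∀ n, ContinuousOn (l n) (Yn n)) ∧
          (∀ n, l n y₀ = lam y₀) ∧
          ∀ ε > (0 : ℝ), ∃ N : ℕ, ∀ n ≥ N, ∀ y ∈ Y, dist (l n y) (lam y) ≤ ε

section

variable {X : Type u} [MetricSpace X] [CompactSpace X] {x₀ : X}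

theorem IsPAANR.approximatePointedExtensionProperty (hX : IsPAANR.{u, w} X x₀) :
    ApproximatePointedExtensionProperty.{u, v} X x₀ := by
  intro Z _ _ _ _ Y hY y₀ hy₀ Yn hYn_closed hYn_succ hYn_iInter lam hlam hlam₀
  obtain ⟨θ, hθ⟩ := exists_isEmbedding_uLift_hilbertCube.{w} X
  -- This metric induces the product uniformity, so uniform convergence in the cube is unambiguous.
  let := UniformSpace.metricSpace (ℕ → I)
  obtain ⟨Λ, hΛ, hΛY⟩ := (hθ.continuous.comp_continuousOn hlam).exists_continuous_eqOn hY
  choose δ hδ r hr hr₀ hrθ using fun k : ℕ => hX _ θ hθ (1 / (k + 1)) Nat.one_div_pos_of_nat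
  have hgood (k : ℕ) : ∀ᶠ n in atTop, Yn n ⊆ Λ ⁻¹' {w | infDist w (range θ) ≤ δ k} := by
    refine (antitone_nat_of_succ_le hYn_succ).eventually_subset_of_forall_mem_nhds hYn_closed
      fun z hz => mem_of_superset ?_ (preimage_mono (ofPred_subset_ofPred.2 fun _ => le_of_lt))
    refine ((isOpen_lt (continuous_infDist_pt _) continuous_const).preimage hΛ).mem_nhds ?_
    rw [hYn_iInter] at hz
    simpa [hΛY hz, infDist_zero_of_mem (mem_range_self _)] using hδ k
  obtain ⟨κ, hκ, hκ_good⟩ := exists_tendsto_atTop_eventually hgood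
  classical
  refine ⟨fun n => if Yn n ⊆ Λ ⁻¹' {w | infDist w (range θ) ≤ δ (κ n)} then r (κ n) ∘ Λ
    else fun _ => x₀, fun n => ?_, fun n => ?_, ?_⟩
  · dsimp only
    split_ifs with h
    exacts [(hr _).comp hΛ.continuousOn h, continuousOn_const]
  · dsimp only
    split_ifs <;> simp [hΛY hy₀, hlam₀, hr₀]
  · rw [← tendstoUniformlyOn_atTop_iff_forall_dist_le, ← hθ.isInducing.tendstoUniformlyOn_comp_iff]
    refine tendstoUniformlyOn_of_forall_dist_le
      (tendsto_one_div_add_atTop_nhds_zero_nat.comp hκ) ?_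
    filter_upwards [hκ_good] with n hn y hy
    simp only [Function.comp_apply, if_pos hn, hΛY hy]
    exact hrθ (κ n) (lam y)

theorem ApproximatePointedExtensionProperty.isPAANR [Nonempty X]
    (hX : ApproximatePointedExtensionProperty.{u, v} X x₀) : IsPAANR.{u, w} X x₀ := by
  intro Y _ _ θ hθ ε hε
  obtain ⟨φ, hφ⟩ := exists_isEmbedding_uLift_hilbertCube.{v} Y
  let := UniformSpace.metricSpace (ℕ → I)
  have hι : IsEmbedding (φ ∘ θ) := hφ.comp hθ
  have hι_inv (x : X) : Function.invFun (φ ∘ θ) (φ (θ x)) = x :=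
    Function.leftInverse_invFun hι.injective x
  let U (n : ℕ) : Set Y := {y | infDist y (range θ) ≤ 1 / (n + 1)}
  have hU_iInter : ⋂ n, φ '' U n = range (φ ∘ θ) := by
    rw [← hφ.injective.injOn.image_iInter_eq, iInter_setOf_infDist_le_one_div_add_one
      (isCompact_range hθ.continuous).isClosed (range_nonempty θ), range_comp]
  obtain ⟨l, hl, hl₀, hl_lim⟩ := hX _ (range (φ ∘ θ)) (isCompact_range hι.continuous).isClosed
    (φ (θ x₀)) (mem_range_self _) (fun n => φ '' U n)
    (fun n => ((isClosed_le (continuous_infDist_pt _) continuous_const).isCompact.image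
      hφ.continuous).isClosed)
    (fun n => image_mono <| ofPred_subset_ofPred.2 fun _ hy =>
      hy.trans (Nat.one_div_le_one_div n.le_succ))
    hU_iInter (Function.invFun (φ ∘ θ)) hι.continuousOn_invFun (hι_inv x₀)
  rw [← tendstoUniformlyOn_atTop_iff_forall_dist_le, ← hθ.isInducing.tendstoUniformlyOn_comp_iff,
    tendstoUniformlyOn_atTop_iff_forall_dist_le] at hl_lim
  obtain ⟨N, hN⟩ := hl_lim ε hε
  refine ⟨1 / (N + 1), Nat.one_div_pos_of_nat, l N ∘ φ,
    (hl N).comp hφ.continuous.continuousOn (mapsTo_image φ _), ?_, fun x => ?_⟩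
  · simpa [hι_inv] using hl₀ N
  · simpa [hι_inv] using hN N le_rfl (φ (θ x)) (mem_range_self x)

end

/-- A pointed compactum `(X, x₀)` is a PAANR if and only if: for every compactum `Z`,
every closed subset `Y ⊆ Z`, every `y₀ ∈ Y`, every decreasing sequence `Y₁ ⊇ Y₂ ⊇ ⋯` of
closed subsets of `Z` with `⋂ n, Yₙ = Y`, and every continuous `λ : Y → X` with
`λ y₀ = x₀`, there is a sequence of continuous maps `λₙ : Yₙ → X` with `λₙ y₀ = λ y₀` for
every `n` and `λₙ y → λ y` uniformly over `y ∈ Y` (with respect to a chosen compatible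
metric on `X`). -/
theorem paanr_iff_approximate_pointed_extension_property
    (X : Type u) [MetricSpace X] [CompactSpace X] [Nonempty X] (x₀ : X) :
    IsPAANR X x₀ ↔
      ∀ (Z : Type v) [TopologicalSpace Z] [CompactSpace Z]
        [TopologicalSpace.MetrizableSpace Z] [Nonempty Z] (Y : Set Z), IsClosed Y →
        ∀ y₀ ∈ Y,
        ∀ Yn : ℕ → Set Z, (∀ n, IsClosed (Yn n)) → (∀ n, Yn (n + 1) ⊆ Yn n) →
          (⋂ n, Yn n) = Y →
          ∀ lam : Z → X, ContinuousOn lam Y → lam y₀ = x₀ →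
            ∃ l : ℕ → Z → X,
              (∀ n, ContinuousOn (l n) (Yn n)) ∧
              (∀ n, l n y₀ = lam y₀) ∧
              ∀ ε > (0 : ℝ), ∃ N : ℕ, ∀ n ≥ N, ∀ y ∈ Y, dist (l n y) (lam y) ≤ ε :=
  ⟨IsPAANR.approximatePointedExtensionProperty, ApproximatePointedExtensionProperty.isPAANR⟩
end

section
/- Let X = ({0} × [−1,1]) ∪ {(t, sin(1/t)) : t ∈ (0,1]} ⊆ ℝ² be the topologist's sine curve and let x₁ = (1, sin 1) be the free endpoint of the oscillating arc. Then the pointed compactum (X, x₁) is a PAANR. -/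
/-!
Fix `δ > 0` and `n` with `1 / (n + 1) < δ`. The point `(0, s)` of the limit segment lies within `δ`
of the arc point `(t, s)` with `1 / t = (2n + 1)π - arcsin s`, and `t` depends continuously on `s`.
Folding the curve onto its arc by `x ↦ max (min x.1 1) (t x.2)` therefore moves points by less
than `δ`, fixes the endpoint `(1, sin 1)` and factors through `ℝ`. Extending the real-valued
factor from `θ(X)` to all of `Y` by Tietze's theorem gives an approximate retraction defined on
all of `Y`.
-/

open Topology

universe u v

/-- The topologist's sine curve
`({0} × [−1,1]) ∪ {(t, sin(1/t)) : t ∈ (0,1]} ⊆ ℝ²`. -/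
noncomputable def sineCurve : Set (ℝ × ℝ) :=
  {p : ℝ × ℝ | p.1 = 0 ∧ p.2 ∈ Set.Icc (-1 : ℝ) 1} ∪
    {p : ℝ × ℝ | ∃ t : ℝ, 0 < t ∧ t ≤ 1 ∧ p = (t, Real.sin (1 / t))}

/-- The free endpoint `x₁ = (1, sin 1)` of the oscillating arc of the topologist's
sine curve. -/
noncomputable def sineCurveEndpoint : ↥sineCurve :=
  ⟨(1, Real.sin 1), Or.inr ⟨1, one_pos, le_rfl, by norm_num⟩⟩

open Real Set

theorem isPAANR_of_forall_approx_factor {X : Type u} [MetricSpace X] [CompactSpace X]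
    {Z : Type*} [TopologicalSpace Z] [TietzeExtension.{v} Z] {x₀ : X}
    (h : ∀ δ > 0, ∃ (g : C(X, Z)) (φ : C(Z, X)), φ (g x₀) = x₀ ∧ ∀ x, dist (φ (g x)) x < δ) :
    IsPAANR.{u, v} X x₀ := by
  intro Y _ _ θ hθ ε hε
  obtain ⟨δ, hδ, hθδ⟩ := Metric.uniformContinuous_iff.mp
    (CompactSpace.uniformContinuous_of_continuous hθ.continuous) ε hε
  obtain ⟨g, φ, hx₀, hφg⟩ := h δ hδ
  obtain ⟨G, hG⟩ := g.exists_extension' (hθ.continuous.isClosedEmbedding hθ.injective)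
  have hGθ (x : X) : G (θ x) = g x := congrFun hG x
  refine ⟨1, one_pos, φ ∘ G, (φ.continuous.comp G.continuous).continuousOn, ?_, fun x => ?_⟩
  · simp only [Function.comp_apply, hGθ, hx₀]
  · simpa only [Function.comp_apply, hGθ] using (hθδ (hφg x)).le

lemma isClosed_setOf_nonpos_or_snd_eq_sin_one_div :
    IsClosed {p : ℝ × ℝ | p.1 ≤ 0 ∨ p.2 = sin (1 / p.1)} := by
  have hopen : IsOpen ({p : ℝ × ℝ | 0 < p.1} ∩ (fun p => p.2 - sin (1 / p.1)) ⁻¹' {0}ᶜ) :=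
    ContinuousOn.isOpen_inter_preimage
      (fun p hp => by fun_prop (disch := exact (ne_of_gt hp)))
      (isOpen_lt continuous_const continuous_fst) isOpen_compl_singleton
  convert hopen.isClosed_compl using 1
  ext p
  simp [sub_eq_zero, not_lt, imp_iff_not_or]

lemma sineCurve_eq_prod_inter :
    sineCurve = (Icc 0 1 ×ˢ Icc (-1) 1) ∩ {p : ℝ × ℝ | p.1 ≤ 0 ∨ p.2 = sin (1 / p.1)} := by
  ext ⟨x, y⟩
  constructor
  · rintro (⟨rfl, hy⟩ | ⟨t, ht0, ht1, h⟩)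
    · exact ⟨⟨left_mem_Icc.mpr zero_le_one, hy⟩, Or.inl le_rfl⟩
    · obtain ⟨rfl, rfl⟩ := Prod.mk.inj h
      exact ⟨⟨⟨ht0.le, ht1⟩, neg_one_le_sin _, sin_le_one _⟩, Or.inr rfl⟩
  · rintro ⟨⟨⟨hx0, hx1⟩, hy⟩, hxy⟩
    rcases hx0.eq_or_lt with rfl | hx0
    · exact Or.inl ⟨rfl, hy⟩
    · exact Or.inr ⟨x, hx0, hx1, Prod.ext rfl (hxy.resolve_left hx0.not_ge)⟩

lemma isCompact_sineCurve : IsCompact sineCurve := by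
  rw [sineCurve_eq_prod_inter]
  exact (isCompact_Icc.prod isCompact_Icc).inter_right isClosed_setOf_nonpos_or_snd_eq_sin_one_div

lemma sineCurve_subset_prod : sineCurve ⊆ Icc 0 1 ×ˢ Icc (-1) 1 :=
  sineCurve_eq_prod_inter ▸ inter_subset_left

instance : CompactSpace sineCurve := isCompact_iff_compactSpace.mp isCompact_sineCurve

lemma mk_sin_one_div_mem_sineCurve {t : ℝ} (h0 : 0 < t) (h1 : t ≤ 1) :
    (t, sin (1 / t)) ∈ sineCurve :=
  Or.inr ⟨t, h0, h1, rfl⟩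

noncomputable def sineArc {a : ℝ} (ha : 0 < a) : C(ℝ, sineCurve) where
  toFun t := ⟨_, mk_sin_one_div_mem_sineCurve (lt_min one_pos (lt_max_of_lt_left ha))
    (min_le_left 1 (max a t))⟩
  continuous_toFun := by
    have hpos (t : ℝ) : min 1 (max a t) ≠ 0 := (lt_min one_pos (lt_max_of_lt_left ha)).ne'
    fun_prop (disch := exact hpos _)

lemma sineArc_of_mem_Icc {a t : ℝ} (ha : 0 < a) (ht : t ∈ Icc a 1) :
    (sineArc ha t : ℝ × ℝ) = (t, sin (1 / t)) := by
  simp [sineArc, max_eq_right ht.1, min_eq_right ht.2]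

/-- The solution `t` of `sin (1 / t) = s` (for `s ∈ [-1, 1]`) with
`1 / t ∈ [(2n + 1/2)π, (2n + 3/2)π]`. -/
noncomputable def sinOneDivRightInv (n : ℕ) (s : ℝ) : ℝ := 1 / ((2 * n + 1) * π - arcsin s)

lemma natCast_add_one_lt_sub_arcsin (n : ℕ) (s : ℝ) :
    (n : ℝ) + 1 < (2 * n + 1) * π - arcsin s := by
  nlinarith [arcsin_le_pi_div_two s, pi_gt_three, n.cast_nonneg (α := ℝ)]

lemma sub_arcsin_pos (n : ℕ) (s : ℝ) : 0 < (2 * n + 1) * π - arcsin s :=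
  n.cast_add_one_pos.trans (natCast_add_one_lt_sub_arcsin n s)

lemma sinOneDivRightInv_pos (n : ℕ) (s : ℝ) : 0 < sinOneDivRightInv n s :=
  one_div_pos.mpr (sub_arcsin_pos n s)

lemma sinOneDivRightInv_lt (n : ℕ) (s : ℝ) : sinOneDivRightInv n s < 1 / (n + 1) :=
  one_div_lt_one_div_of_lt n.cast_add_one_pos (natCast_add_one_lt_sub_arcsin n s)

lemma sinOneDivRightInv_neg_one_le (n : ℕ) (s : ℝ) :
    sinOneDivRightInv n (-1) ≤ sinOneDivRightInv n s :=
  one_div_le_one_div_of_le (sub_arcsin_pos n s)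
    (by linarith [arcsin_neg_one, neg_pi_div_two_le_arcsin s])

lemma continuous_sinOneDivRightInv (n : ℕ) : Continuous (sinOneDivRightInv n) :=
  continuous_const.div (continuous_const.sub continuous_arcsin) fun s => (sub_arcsin_pos n s).ne'

lemma sin_one_div_sinOneDivRightInv (n : ℕ) {s : ℝ} (hs : s ∈ Icc (-1) 1) :
    sin (1 / sinOneDivRightInv n s) = s := by
  rw [sinOneDivRightInv, one_div_one_div,
    show (2 * n + 1) * π - arcsin s = (π - arcsin s) + n * (2 * π) by ring,
    sin_add_nat_mul_two_pi, sin_pi_sub, sin_arcsin hs.1 hs.2]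

lemma dist_fold_sineCurve_lt {p : ℝ × ℝ} (hp : p ∈ sineCurve) {τ δ : ℝ} (hτ : 0 < τ)
    (hτδ : τ < δ) (hsin : sin (1 / τ) = p.2) :
    dist (max (min p.1 1) τ, sin (1 / max (min p.1 1) τ)) p < δ := by
  rcases hp with ⟨hp0, -⟩ | ⟨t, ht0, ht1, rfl⟩
  · obtain ⟨x, y⟩ := p
    obtain rfl : x = 0 := hp0
    rwa [min_eq_left zero_le_one, max_eq_right hτ.le, hsin, Prod.dist_eq, dist_self,
      Real.dist_eq, sub_zero, abs_of_pos hτ, max_eq_left hτ.le]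
  · dsimp only at hsin ⊢
    rcases le_total τ t with hτt | htτ
    · rw [min_eq_left ht1, max_eq_left hτt, dist_self]
      exact hτ.trans hτδ
    · rw [min_eq_left ht1, max_eq_right htτ, hsin, Prod.dist_eq, dist_self, Real.dist_eq,
        abs_of_nonneg (sub_nonneg.mpr htτ), max_eq_left (sub_nonneg.mpr htτ)]
      linarith

theorem sineCurve_exists_approx_factor {δ : ℝ} (hδ : 0 < δ) :
    ∃ (g : C(sineCurve, ℝ)) (φ : C(ℝ, sineCurve)),
      φ (g sineCurveEndpoint) = sineCurveEndpoint ∧ ∀ x, dist (φ (g x)) x < δ := by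
  obtain ⟨n, hn⟩ := exists_nat_one_div_lt hδ
  set σ := sinOneDivRightInv n
  have hσ_le_one (s : ℝ) : σ s ≤ 1 :=
    (sinOneDivRightInv_lt n s).le.trans (div_le_one_of_le₀ (by simp) n.cast_add_one_pos.le)
  let g : C(sineCurve, ℝ) :=
    ⟨fun x => max (min (x : ℝ × ℝ).1 1) (σ (x : ℝ × ℝ).2), by
      have := continuous_sinOneDivRightInv n; fun_prop⟩
  let φ := sineArc (sinOneDivRightInv_pos n (-1))
  have hφg (x : sineCurve) : (φ (g x) : ℝ × ℝ) = (g x, sin (1 / g x)) :=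
    sineArc_of_mem_Icc _ ⟨le_max_of_le_right (sinOneDivRightInv_neg_one_le n _),
      max_le (min_le_right _ _) (hσ_le_one _)⟩
  refine ⟨g, φ, Subtype.ext ?_, fun x => ?_⟩
  · have : g sineCurveEndpoint = 1 := by simpa [g, sineCurveEndpoint] using hσ_le_one _
    rw [hφg, this, div_one]
    rfl
  · rw [Subtype.dist_eq, hφg]
    exact dist_fold_sineCurve_lt x.2 (sinOneDivRightInv_pos n _)
      ((sinOneDivRightInv_lt n _).trans hn)
      (sin_one_div_sinOneDivRightInv n (sineCurve_subset_prod x.2).2)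

/-- The topologist's sine curve, pointed at the free endpoint `x₁ = (1, sin 1)` of the
oscillating arc, is a PAANR. -/
theorem sineCurve_isPAANR_endpoint : IsPAANR ↥sineCurve sineCurveEndpoint :=
  isPAANR_of_forall_approx_factor fun _ => sineCurve_exists_approx_factor
end
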